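/- arXiv:2503.04129 — 3 statements merged into one kernel-verified Lean document; each statement's English description precedes it below -/
import Mathlib

section
/- Let X ⊆ ℝⁿ be a nonempty compact set, W ⊆ ℝᵖ a nonempty compact set, and g : ℝⁿ × ℝᵖ → ℝᵐ a controller such that f(x, g(x,w)) ∈ X for all x ∈ X and w ∈ W. Suppose there exist a function V : ℝⁿ × ℝⁿ → [0,∞), class K∞ functions α₁, α₂, α₃ and a class K function σ such that: (i) for all x, x̂ ∈ X, α₁(|x − x̂|) ≤ V(x, x̂) ≤ α₂(|x − x̂|); and (ii) for all x, x̂ ∈ X and all w, ŵ ∈ W, V(f(x, g(x,w)), f(x̂, g(x̂,ŵ))) − V(x, x̂) ≤ −α₃(|x − x̂|) + σ(|w − ŵ|). Then the closed-loop system is incrementally input-to-state stable on X with respect to inputs in W: there exist a class KL function β and a class K∞ function γ such that for all x, x̂ ∈ X, all input sequences w, ŵ : ℕ → W, and all k ∈ ℕ, |x_{x,w}(k) − x_{x̂,ŵ}(k)| ≤ β(|x − x̂|, k) + γ(sup_{j∈ℕ} |w(j) − ŵ(j)|). -/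
noncomputable section

/-- Euclidean state space ℝⁿ. -/
abbrev Euc (n : ℕ) : Type := EuclideanSpace ℝ (Fin n)

/-- A function `α : [0,∞) → [0,∞)` (modeled on `ℝ`, with the relevant properties
on `Set.Ici 0`) is of class 𝒦 if it is continuous, strictly increasing and `α 0 = 0`. -/
def IsClassK (α : ℝ → ℝ) : Prop :=
  ContinuousOn α (Set.Ici 0) ∧ StrictMonoOn α (Set.Ici 0) ∧ α 0 = 0

/-- Class 𝒦∞: class 𝒦 and `α s → ∞` as `s → ∞`. -/
def IsClassKInfty (α : ℝ → ℝ) : Prop :=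
  IsClassK α ∧ Filter.Tendsto α Filter.atTop Filter.atTop

/-- Class 𝒦ℒ. -/
def IsClassKL (β : ℝ → ℝ → ℝ) : Prop :=
  (∀ t, 0 ≤ t → IsClassK (fun s => β s t)) ∧
  (∀ s, 0 ≤ s → Filter.Tendsto (fun t => β s t) Filter.atTop (nhds 0))

/-- Closed-loop trajectory: `traj f g x w 0 = x`,
`traj f g x w (k+1) = f (traj f g x w k) (g (traj f g x w k) (w k))`. -/
def traj {n m p : ℕ} (f : Euc n → Euc m → Euc n) (g : Euc n → Euc p → Euc m)
    (x : Euc n) (w : ℕ → Euc p) : ℕ → Euc n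
  | 0 => x
  | k + 1 => f (traj f g x w k) (g (traj f g x w k) (w k))

lemma exists_kinfty_inverse {θ : ℝ → ℝ} (h : IsClassKInfty θ) :
    ∃ ψ : ℝ → ℝ, Continuous ψ ∧ Monotone ψ ∧ (∀ y, 0 ≤ y → 0 ≤ ψ y) ∧
      (∀ y, 0 ≤ y → θ (ψ y) = y) ∧ (∀ s, 0 ≤ s → ψ (θ s) = s) := by
  obtain ⟨⟨hc, hm, hz⟩, htop⟩ := h
  set S : ℝ → Set ℝ := fun y => {s : ℝ | 0 ≤ s ∧ y ≤ θ s} with hS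
  have hne : ∀ y, (S y).Nonempty := by
    intro y
    obtain ⟨s, hs1, hs2⟩ := ((htop.eventually_ge_atTop y).and
      (Filter.eventually_ge_atTop (0:ℝ))).exists
    exact ⟨s, hs2, hs1⟩
  have hbdd : ∀ y, BddBelow (S y) := fun y => ⟨0, fun s hs => hs.1⟩
  have hclosed : ∀ y, IsClosed (S y) := by
    intro y
    have : S y = Set.Ici 0 ∩ θ ⁻¹' Set.Ici y := by
      ext s; simp [hS, Set.mem_setOf_eq, and_comm]
    rw [this]
    exact hc.preimage_isClosed_of_isClosed isClosed_Ici isClosed_Ici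
  set ψ₀ : ℝ → ℝ := fun y => sInf (S y) with hψ₀
  have hmem : ∀ y, ψ₀ y ∈ S y := fun y => (hclosed y).csInf_mem (hne y) (hbdd y)
  have hψ₀nn : ∀ y, 0 ≤ ψ₀ y := fun y => (hmem y).1
  -- right inverse
  have hri : ∀ y, 0 ≤ y → θ (ψ₀ y) = y := by
    intro y hy
    obtain ⟨ha0, hay⟩ := hmem y
    have hIcc : y ∈ Set.Icc (θ 0) (θ (ψ₀ y)) := ⟨by rw [hz]; exact hy, hay⟩
    obtain ⟨s, hsmem, hsy⟩ := intermediate_value_Icc ha0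
      (hc.mono (fun t ht => ht.1)) hIcc
    have hle : ψ₀ y ≤ s := csInf_le (hbdd y) ⟨hsmem.1, hsy.ge⟩
    have : s = ψ₀ y := le_antisymm hsmem.2 hle
    rw [← this, hsy]
  -- left inverse
  have hli : ∀ s, 0 ≤ s → ψ₀ (θ s) = s := by
    intro s hs
    refine le_antisymm (csInf_le (hbdd _) ⟨hs, le_rfl⟩) (le_csInf (hne _) ?_)
    intro t ⟨ht0, hts⟩
    by_contra hlt
    exact absurd hts (not_le.2 (hm ht0 hs (not_le.1 hlt)))
  -- monotone on nonneg
  have hmono₀ : ∀ y₁ y₂, y₁ ≤ y₂ → ψ₀ y₁ ≤ ψ₀ y₂ := by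
    intro y₁ y₂ h12
    exact csInf_le_csInf (hbdd _) (hne _) (fun s hs => ⟨hs.1, h12.trans hs.2⟩)
  refine ⟨fun y => if 0 ≤ y then ψ₀ y else y, ?_, ?_, ?_, ?_, ?_⟩
  case refine_2 =>
    intro y₁ y₂ h12
    by_cases h1 : 0 ≤ y₁
    · simp [h1, h1.trans h12, hmono₀ _ _ h12]
    · by_cases h2 : 0 ≤ y₂
      · simp only [h1, h2, if_true, if_false]
        exact le_trans (le_of_not_ge h1) (hψ₀nn y₂)
      · simp [h1, h2, h12]
  case refine_3 => intro y hy; simp [hy, hψ₀nn y]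
  case refine_4 => intro y hy; simp [hy, hri y hy]
  case refine_5 =>
    intro s hs
    have h0 : (0:ℝ) ≤ θ s := by rw [← hz]; exact hm.monotoneOn (Set.mem_Ici.2 le_rfl) hs hs
    simp [h0, hli s hs]
  case refine_1 =>
    have hmono : Monotone (fun y => if 0 ≤ y then ψ₀ y else y) := by
      intro y₁ y₂ h12
      by_cases h1 : 0 ≤ y₁
      · simp [h1, h1.trans h12, hmono₀ _ _ h12]
      · by_cases h2 : 0 ≤ y₂
        · simp only [h1, h2, if_true, if_false]
          exact le_trans (le_of_not_ge h1) (hψ₀nn y₂)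
        · simp [h1, h2, h12]
    have hsurj : Function.Surjective (fun y => if 0 ≤ y then ψ₀ y else y) := by
      intro s
      by_cases hs : 0 ≤ s
      · refine ⟨θ s, ?_⟩
        have h0 : (0:ℝ) ≤ θ s := by rw [← hz]; exact hm.monotoneOn (Set.mem_Ici.2 le_rfl) hs hs
        simp [h0, hli s hs]
      · exact ⟨s, by simp [hs]⟩
    exact hmono.continuous_of_surjective hsurj

/-- a `δ`-ISS-CLF on a compact, robustly forward invariant set `X`
with compact input set `W` implies incremental ISS on `X`. -/
theorem stmt_1 {n m p : ℕ}
    (f : Euc n → Euc m → Euc n) (g : Euc n → Euc p → Euc m)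
    (X : Set (Euc n)) (W : Set (Euc p))
    (hXne : X.Nonempty) (hXcomp : IsCompact X)
    (hWne : W.Nonempty) (hWcomp : IsCompact W)
    (hinv : ∀ x ∈ X, ∀ w ∈ W, f x (g x w) ∈ X)
    (V : Euc n → Euc n → ℝ) (hVnonneg : ∀ x y, 0 ≤ V x y)
    (α₁ α₂ α₃ σ : ℝ → ℝ)
    (hα₁ : IsClassKInfty α₁) (hα₂ : IsClassKInfty α₂) (hα₃ : IsClassKInfty α₃)
    (hσ : IsClassK σ)
    (hlow : ∀ x ∈ X, ∀ x' ∈ X, α₁ ‖x - x'‖ ≤ V x x')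
    (hup : ∀ x ∈ X, ∀ x' ∈ X, V x x' ≤ α₂ ‖x - x'‖)
    (hdecr : ∀ x ∈ X, ∀ x' ∈ X, ∀ w ∈ W, ∀ w' ∈ W,
      V (f x (g x w)) (f x' (g x' w')) - V x x' ≤ -α₃ ‖x - x'‖ + σ ‖w - w'‖) :
    ∃ (β : ℝ → ℝ → ℝ) (γ : ℝ → ℝ), IsClassKL β ∧ IsClassKInfty γ ∧
      ∀ x ∈ X, ∀ x' ∈ X, ∀ w w' : ℕ → Euc p,
        (∀ j, w j ∈ W) → (∀ j, w' j ∈ W) → ∀ k : ℕ,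
        ‖traj f g x w k - traj f g x' w' k‖ ≤
          β ‖x - x'‖ k + γ (⨆ j, ‖w j - w' j‖) := by
  obtain ⟨⟨h1c, h1m, h1z⟩, h1top⟩ := hα₁
  obtain ⟨⟨h2c, h2m, h2z⟩, h2top⟩ := hα₂
  obtain ⟨⟨h3c, h3m, h3z⟩, h3top⟩ := hα₃
  obtain ⟨hσc, hσm, hσz⟩ := hσ
  obtain ⟨ψ₁, ψ₁c, ψ₁m, ψ₁nn, ψ₁r, ψ₁l⟩ := exists_kinfty_inverse ⟨⟨h1c, h1m, h1z⟩, h1top⟩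
  obtain ⟨ψ₂, ψ₂c, ψ₂m, ψ₂nn, ψ₂r, ψ₂l⟩ := exists_kinfty_inverse ⟨⟨h2c, h2m, h2z⟩, h2top⟩
  obtain ⟨ψ₃, ψ₃c, ψ₃m, ψ₃nn, ψ₃r, ψ₃l⟩ := exists_kinfty_inverse ⟨⟨h3c, h3m, h3z⟩, h3top⟩
  have ψ₁0 : ψ₁ 0 = 0 := by have := ψ₁l 0 le_rfl; rwa [h1z] at this
  have ψ₂0 : ψ₂ 0 = 0 := by have := ψ₂l 0 le_rfl; rwa [h2z] at this
  have ψ₃0 : ψ₃ 0 = 0 := by have := ψ₃l 0 le_rfl; rwa [h3z] at this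
  -- monotonicity helpers
  have mono₁ : ∀ a b : ℝ, 0 ≤ a → a ≤ b → α₁ a ≤ α₁ b :=
    fun a b ha hab => h1m.monotoneOn ha (ha.trans hab) hab
  have mono₂ : ∀ a b : ℝ, 0 ≤ a → a ≤ b → α₂ a ≤ α₂ b :=
    fun a b ha hab => h2m.monotoneOn ha (ha.trans hab) hab
  have mono₃ : ∀ a b : ℝ, 0 ≤ a → a ≤ b → α₃ a ≤ α₃ b :=
    fun a b ha hab => h3m.monotoneOn ha (ha.trans hab) hab
  have monoσ : ∀ a b : ℝ, 0 ≤ a → a ≤ b → σ a ≤ σ b :=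
    fun a b ha hab => hσm.monotoneOn ha (ha.trans hab) hab
  have α₂nn : ∀ a : ℝ, 0 ≤ a → 0 ≤ α₂ a := fun a ha => h2z ▸ mono₂ 0 a le_rfl ha
  have α₃nn : ∀ a : ℝ, 0 ≤ a → 0 ≤ α₃ a := fun a ha => h3z ▸ mono₃ 0 a le_rfl ha
  have σnn : ∀ a : ℝ, 0 ≤ a → 0 ≤ σ a := fun a ha => hσz ▸ monoσ 0 a le_rfl ha
  -- bound on X
  obtain ⟨D, hD⟩ := Metric.isBounded_iff.1 hXcomp.isBounded
  have hD' : ∀ a ∈ X, ∀ b ∈ X, ‖a - b‖ ≤ D := by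
    intro a ha b hb; rw [← dist_eq_norm]; exact hD ha hb
  obtain ⟨x₀, hx₀⟩ := hXne
  have hD0 : 0 ≤ D := le_trans dist_nonneg (hD hx₀ hx₀)
  obtain ⟨DW, hDW⟩ := Metric.isBounded_iff.1 hWcomp.isBounded
  have hDW' : ∀ a ∈ W, ∀ b ∈ W, ‖a - b‖ ≤ DW := by
    intro a ha b hb; rw [← dist_eq_norm]; exact hDW ha hb
  set M : ℝ := α₂ D with hMdef
  have hM0 : 0 ≤ M := α₂nn D hD0
  set ρ : ℝ → ℝ := fun v => α₃ (ψ₂ v) with hρdef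
  have ρnn : ∀ v, 0 ≤ v → 0 ≤ ρ v := fun v hv => α₃nn _ (ψ₂nn v hv)
  have ρpos : ∀ v, 0 < v → 0 < ρ v := by
    intro v hv
    have h2 : 0 < ψ₂ v := by
      rcases (ψ₂nn v hv.le).lt_or_eq with h | h
      · exact h
      · exfalso
        have := ψ₂r v hv.le
        rw [← h, h2z] at this; linarith
    have := h3m (Set.mem_Ici.2 le_rfl) (Set.mem_Ici.2 h2.le) h2
    rw [h3z] at this; exact this
  have ρmono : ∀ a b : ℝ, 0 ≤ a → a ≤ b → ρ a ≤ ρ b :=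
    fun a b ha hab => mono₃ _ _ (ψ₂nn a ha) (ψ₂m hab)
  -- the KL time-decay function μ
  set Sμ : ℝ → Set ℝ := fun t => {M + 1} ∪ {ε | 0 < ε ∧ 2 * M ≤ ρ ε * t} with hSμ
  have Sμne : ∀ t, (Sμ t).Nonempty := fun t => ⟨M + 1, Or.inl rfl⟩
  have Sμbdd : ∀ t, BddBelow (Sμ t) := by
    intro t
    refine ⟨0, fun b hb => ?_⟩
    rcases hb with hb | hb
    · simp only [Set.mem_singleton_iff] at hb; linarith
    · exact hb.1.le
  set μ : ℝ → ℝ := fun t => sInf (Sμ t) with hμdef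
  have μnn : ∀ t, 0 ≤ μ t := by
    intro t
    refine le_csInf (Sμne t) (fun b hb => ?_)
    rcases hb with hb | hb
    · simp only [Set.mem_singleton_iff] at hb; linarith
    · exact hb.1.le
  have μlim : Filter.Tendsto μ Filter.atTop (nhds 0) := by
    rw [tendsto_order]
    constructor
    · intro a ha
      exact Filter.Eventually.of_forall fun t => lt_of_lt_of_le ha (μnn t)
    · intro a ha
      have hρa : 0 < ρ (a / 2) := ρpos _ (by linarith)
      refine Filter.eventually_atTop.2 ⟨2 * M / ρ (a / 2), fun t ht => ?_⟩
      have hmem : a / 2 ∈ Sμ t := by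
        refine Or.inr ⟨by linarith, ?_⟩
        calc 2 * M = ρ (a / 2) * (2 * M / ρ (a / 2)) := by
              field_simp
          _ ≤ ρ (a / 2) * t := by
              exact mul_le_mul_of_nonneg_left ht hρa.le
      exact lt_of_le_of_lt (csInf_le (Sμbdd t) hmem) (by linarith)
  -- the comparison functions
  refine ⟨fun s t => ψ₁ (2 * min (α₂ s) (μ t)) + s * (1 + t)⁻¹,
    fun d => ψ₁ (2 * (α₂ (ψ₃ (2 * σ d)) + σ d)) + d, ?_, ?_, ?_⟩
  · -- β is class KL
    constructor
    · intro t ht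
      refine ⟨?_, ?_, ?_⟩
      · refine ContinuousOn.add ?_ ((continuous_id.mul continuous_const).continuousOn)
        exact ψ₁c.comp_continuousOn
          (continuousOn_const.mul (h2c.inf continuousOn_const))
      · intro s₁ hs₁ s₂ hs₂ h12
        have e1 : ψ₁ (2 * min (α₂ s₁) (μ t)) ≤ ψ₁ (2 * min (α₂ s₂) (μ t)) := by
          apply ψ₁m
          have := (h2m hs₁ hs₂ h12).le
          nlinarith [min_le_min this (le_refl (μ t)), inf_le_inf_right (μ t) this]
        have e2 : s₁ * (1 + t)⁻¹ < s₂ * (1 + t)⁻¹ :=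
          mul_lt_mul_of_pos_right h12 (inv_pos.2 (by linarith))
        linarith
      · simp only [h2z, min_eq_left (μnn t), mul_zero, zero_mul, ψ₁0, add_zero]
    · intro s hs
      have hmin : Filter.Tendsto (fun t => min (α₂ s) (μ t)) Filter.atTop (nhds 0) := by
        refine tendsto_of_tendsto_of_tendsto_of_le_of_le tendsto_const_nhds μlim
          (fun t => le_min (α₂nn s hs) (μnn t)) (fun t => min_le_right _ _)
      have h1 : Filter.Tendsto (fun t => ψ₁ (2 * min (α₂ s) (μ t)))
          Filter.atTop (nhds 0) := by
        have hm2 : Filter.Tendsto (fun t => 2 * min (α₂ s) (μ t))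
            Filter.atTop (nhds 0) := by simpa using hmin.const_mul 2
        have := (ψ₁c.tendsto 0).comp hm2
        simpa [ψ₁0, Function.comp_def] using this
      have h2 : Filter.Tendsto (fun t : ℝ => s * (1 + t)⁻¹) Filter.atTop (nhds 0) := by
        have : Filter.Tendsto (fun t : ℝ => (1 + t)⁻¹) Filter.atTop (nhds 0) :=
          tendsto_inv_atTop_zero.comp (Filter.tendsto_atTop_add_const_left Filter.atTop (1:ℝ) Filter.tendsto_id)
        simpa using this.const_mul s
      simpa using h1.add h2
  · -- γ is class K∞
    have hmaps : ∀ d ∈ Set.Ici (0:ℝ), ψ₃ (2 * σ d) ∈ Set.Ici (0:ℝ) := by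
      intro d hd
      exact ψ₃nn _ (by have := σnn d hd; linarith)
    refine ⟨⟨?_, ?_, ?_⟩, ?_⟩
    · refine ContinuousOn.add ?_ continuousOn_id
      refine ψ₁c.comp_continuousOn (continuousOn_const.mul (ContinuousOn.add ?_ hσc))
      exact h2c.comp (ψ₃c.comp_continuousOn (continuousOn_const.mul hσc)) hmaps
    · intro d₁ hd₁ d₂ hd₂ h12
      have hσ12 : σ d₁ ≤ σ d₂ := (hσm hd₁ hd₂ h12).le
      have e1 : ψ₁ (2 * (α₂ (ψ₃ (2 * σ d₁)) + σ d₁)) ≤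
          ψ₁ (2 * (α₂ (ψ₃ (2 * σ d₂)) + σ d₂)) := by
        apply ψ₁m
        have e2 : α₂ (ψ₃ (2 * σ d₁)) ≤ α₂ (ψ₃ (2 * σ d₂)) := by
          apply mono₂ _ _ (ψ₃nn _ (by have := σnn d₁ hd₁; linarith))
          exact ψ₃m (by linarith)
        linarith
      simpa using add_lt_add_of_le_of_lt e1 h12
    · simp [hσz, ψ₃0, h2z, ψ₁0]
    · refine Filter.tendsto_atTop_mono' _ ?_ Filter.tendsto_id
      filter_upwards [Filter.eventually_ge_atTop (0:ℝ)] with d hd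
      have h1 : 0 ≤ σ d := σnn d hd
      have h2 : 0 ≤ α₂ (ψ₃ (2 * σ d)) := α₂nn _ (ψ₃nn _ (by linarith))
      have := ψ₁nn (2 * (α₂ (ψ₃ (2 * σ d)) + σ d)) (by linarith)
      simp only [id]
      linarith
  · -- the trajectory estimate
    intro x hx x' hx' w w' hw hw' k
    set d : ℝ := ⨆ j, ‖w j - w' j‖ with hddef
    have hbd : BddAbove (Set.range fun j => ‖w j - w' j‖) := by
      refine ⟨DW, ?_⟩
      rintro _ ⟨j, rfl⟩
      exact hDW' _ (hw j) _ (hw' j)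
    have hdj : ∀ j, ‖w j - w' j‖ ≤ d := fun j => le_ciSup hbd j
    have hd0 : 0 ≤ d := le_trans (norm_nonneg _) (hdj 0)
    set s₀ : ℝ := σ d with hs₀def
    have hs₀ : 0 ≤ s₀ := σnn d hd0
    set L : ℝ := α₂ (ψ₃ (2 * s₀)) with hLdef
    have hL0 : 0 ≤ L := α₂nn _ (ψ₃nn _ (by linarith))
    have hρL : ∀ v, 0 ≤ v → L ≤ v → 2 * s₀ ≤ ρ v := by
      intro v hv hLv
      have h1 : ψ₃ (2 * s₀) ≤ ψ₂ v := by
        have := ψ₂m hLv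
        rwa [ψ₂l _ (ψ₃nn _ (by linarith))] at this
      have h2 : α₃ (ψ₃ (2 * s₀)) ≤ α₃ (ψ₂ v) := mono₃ _ _ (ψ₃nn _ (by linarith)) h1
      rwa [ψ₃r _ (by linarith)] at h2
    -- trajectories stay in X
    have hmem : ∀ k, traj f g x w k ∈ X ∧ traj f g x' w' k ∈ X := by
      intro k
      induction k with
      | zero => exact ⟨hx, hx'⟩
      | succ k ih =>
          exact ⟨hinv _ ih.1 _ (hw k), hinv _ ih.2 _ (hw' k)⟩
    set Vk : ℕ → ℝ := fun k => V (traj f g x w k) (traj f g x' w' k) with hVkdef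
    have hVk0 : ∀ k, 0 ≤ Vk k := fun k => hVnonneg _ _
    have hVkub : ∀ k, Vk k ≤ M := by
      intro k
      refine le_trans (hup _ (hmem k).1 _ (hmem k).2) ?_
      exact mono₂ _ _ (norm_nonneg _) (hD' _ (hmem k).1 _ (hmem k).2)
    have hstep : ∀ k, Vk (k + 1) ≤ Vk k - ρ (Vk k) + s₀ := by
      intro k
      have hde := hdecr _ (hmem k).1 _ (hmem k).2 _ (hw k) _ (hw' k)
      have hρle : ρ (Vk k) ≤ α₃ ‖traj f g x w k - traj f g x' w' k‖ := by
        refine mono₃ _ _ (ψ₂nn _ (hVk0 k)) ?_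
        have := ψ₂m (hup _ (hmem k).1 _ (hmem k).2)
        rwa [ψ₂l _ (norm_nonneg _)] at this
      have hσle : σ ‖w k - w' k‖ ≤ s₀ := monoσ _ _ (norm_nonneg _) (hdj k)
      have htr : Vk (k + 1) =
          V (f (traj f g x w k) (g (traj f g x w k) (w k)))
            (f (traj f g x' w' k) (g (traj f g x' w' k) (w' k))) := rfl
      rw [htr]
      linarith
    have hInv : ∀ c, L + s₀ ≤ c → ∀ k, Vk k ≤ c → Vk (k + 1) ≤ c := by
      intro c hc k hk
      rcases le_or_gt (Vk k) L with h | h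
      · have := ρnn (Vk k) (hVk0 k)
        have := hstep k
        linarith
      · have := hρL (Vk k) (hVk0 k) h.le
        have := hstep k
        linarith
    have hA : ∀ k, Vk k ≤ max (Vk 0) (L + s₀) := by
      intro k
      induction k with
      | zero => exact le_max_left _ _
      | succ k ih => exact hInv _ (le_max_right _ _) k ih
    have hB : ∀ ε : ℝ, 0 < ε → ∀ k : ℕ,
        Vk k ≤ max (max ε L + s₀) (M - k * (ρ ε / 2)) := by
      intro ε hε k
      induction k with
      | zero =>
          refine le_trans (hVkub 0) (le_trans ?_ (le_max_right _ _))
          simp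
      | succ k ih =>
          rcases le_or_gt (Vk k) (max ε L + s₀) with h | h
          · exact le_trans (hInv _ (by
              have := le_max_right ε L; linarith) k h) (le_max_left _ _)
          · have hVε : ε ≤ Vk k := le_trans (le_trans (le_max_left ε L)
              (by linarith)) h.le
            have hVL : L ≤ Vk k := le_trans (le_trans (le_max_right ε L)
              (by linarith)) h.le
            have hρε : ρ ε ≤ ρ (Vk k) := ρmono _ _ hε.le hVε
            have h2s : 2 * s₀ ≤ ρ (Vk k) := hρL _ (hVk0 k) hVL
            have hVkle : Vk k ≤ M - k * (ρ ε / 2) := by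
              rcases le_max_iff.1 ih with h' | h'
              · linarith
              · exact h'
            have hc : ((k : ℝ) + 1) * (ρ ε / 2) = k * (ρ ε / 2) + ρ ε / 2 := by ring
            have := hstep k
            refine le_trans ?_ (le_max_right _ _)
            push_cast
            rw [hc]
            linarith
    have hC : ∀ k : ℕ, Vk k ≤ μ (k : ℝ) + (L + s₀) := by
      intro k
      have : Vk k - (L + s₀) ≤ μ (k : ℝ) := by
        refine le_csInf (Sμne _) (fun b hb => ?_)
        rcases hb with hb | hb
        · simp only [Set.mem_singleton_iff] at hb
          subst hb
          have h1 := hA k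
          have h2 := hVkub 0
          rcases le_max_iff.1 h1 with h | h <;> linarith
        · obtain ⟨hb0, hbk⟩ := hb
          have h1 := hB b hb0 k
          have h2 : M - (k : ℝ) * (ρ b / 2) ≤ 0 := by
            have : (k : ℝ) * (ρ b / 2) = ρ b * (k : ℝ) / 2 := by ring
            linarith
          have h3 : max b L ≤ b + L := by
            rcases le_total b L with h | h
            · exact le_trans (max_le (by linarith) le_rfl) (by linarith)
            · exact le_trans (max_le le_rfl (by linarith)) (by linarith)
          rcases le_max_iff.1 h1 with h | h <;> linarith
      linarith
    -- final assembly
    have hr : α₁ ‖traj f g x w k - traj f g x' w' k‖ ≤ Vk k :=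
      hlow _ (hmem k).1 _ (hmem k).2
    have h2 : ‖traj f g x w k - traj f g x' w' k‖ ≤ ψ₁ (Vk k) := by
      have := ψ₁m hr
      rwa [ψ₁l _ (norm_nonneg _)] at this
    set a : ℝ := min (α₂ ‖x - x'‖) (μ (k : ℝ)) with hadef
    have hV0le : Vk 0 ≤ α₂ ‖x - x'‖ := hup _ hx _ hx'
    have ha0 : 0 ≤ a := le_min (α₂nn _ (norm_nonneg _)) (μnn _)
    have h3 : Vk k ≤ a + (L + s₀) := by
      have hA' : Vk k ≤ α₂ ‖x - x'‖ + (L + s₀) := by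
        rcases le_max_iff.1 (hA k) with h | h
        · have := α₂nn ‖x - x'‖ (norm_nonneg _); linarith
        · have := hV0le
          have := α₂nn ‖x - x'‖ (norm_nonneg _)
          linarith
      have := le_min hA' (hC k)
      rwa [min_add_add_right] at this
    have h4 : ψ₁ (Vk k) ≤ ψ₁ (2 * a) + ψ₁ (2 * (L + s₀)) := by
      have hG : 0 ≤ L + s₀ := by linarith
      rcases le_total a (L + s₀) with h | h
      · have : Vk k ≤ 2 * (L + s₀) := by linarith
        have h5 := ψ₁m this
        have h6 := ψ₁nn (2 * a) (by linarith)
        linarith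
      · have : Vk k ≤ 2 * a := by linarith
        have h5 := ψ₁m this
        have h6 := ψ₁nn (2 * (L + s₀)) (by linarith)
        linarith
    have h7 : (0:ℝ) ≤ ‖x - x'‖ * (1 + (k : ℝ))⁻¹ := by positivity
    have h8 : ψ₁ (2 * a) ≤ ψ₁ (2 * min (α₂ ‖x - x'‖) (μ (k : ℝ))) := le_of_eq rfl
    calc ‖traj f g x w k - traj f g x' w' k‖ ≤ ψ₁ (Vk k) := h2
      _ ≤ ψ₁ (2 * a) + ψ₁ (2 * (L + s₀)) := h4
      _ ≤ (ψ₁ (2 * min (α₂ ‖x - x'‖) (μ (k : ℝ))) + ‖x - x'‖ * (1 + (k : ℝ))⁻¹) +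
          (ψ₁ (2 * (α₂ (ψ₃ (2 * σ d)) + σ d)) + d) := by
        rw [hadef, hLdef, hs₀def]
        linarith [h7, hd0]
      _ = _ := rfl
end
end

section
/- Let X ⊆ ℝⁿ and W ⊆ ℝᵖ with f(x, g(x,w)) ∈ X for all x ∈ X and w ∈ W. Let V : ℝⁿ × ℝⁿ → [0,∞), let α, χ be class K∞ functions such that s ↦ s − α(s) is class K and s ↦ s − χ(s) is class K∞, and let σ be a class K function. Assume that for all x, x̂ ∈ X and all w, ŵ ∈ W, V(f(x, g(x,w)), f(x̂, g(x̂,ŵ))) ≤ V(x, x̂) − α(V(x, x̂)) + σ(|w − ŵ|). Fix c ≥ 0. Then the sublevel set S := {(x, x̂) ∈ X × X : V(x, x̂) ≤ α⁻¹(χ⁻¹(σ(c)))} is forward invariant with respect to inputs whose pointwise difference is bounded by c: for all (x, x̂) ∈ S and all w, ŵ ∈ W with |w − ŵ| ≤ c, one has V(f(x, g(x,w)), f(x̂, g(x̂,ŵ))) ≤ α⁻¹(χ⁻¹(σ(c))), i.e. (f(x, g(x,w)), f(x̂, g(x̂,ŵ))) ∈ S. -/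
noncomputable section

/-- forward invariance of the sublevel set
`S = {(x,x̂) ∈ X × X : V(x,x̂) ≤ α⁻¹(χ⁻¹(σ(c)))}`. -/
theorem stmt_4 {n m p : ℕ}
    (f : Euc n → Euc m → Euc n) (g : Euc n → Euc p → Euc m)
    (X : Set (Euc n)) (W : Set (Euc p))
    (hXinv : ∀ x ∈ X, ∀ w ∈ W, f x (g x w) ∈ X)
    (V : Euc n → Euc n → ℝ) (hVnonneg : ∀ x y, 0 ≤ V x y)
    (α χ σ : ℝ → ℝ)
    (hα : IsClassKInfty α) (hχ : IsClassKInfty χ) (hσ : IsClassK σ)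
    (hidα : IsClassK (fun s => s - α s))
    (hidχ : IsClassKInfty (fun s => s - χ s))
    (αinv χinv : ℝ → ℝ)
    (hαinv_nonneg : ∀ s, 0 ≤ s → 0 ≤ αinv s)
    (hαinv_left : ∀ s, 0 ≤ s → αinv (α s) = s)
    (hαinv_right : ∀ s, 0 ≤ s → α (αinv s) = s)
    (hχinv_nonneg : ∀ s, 0 ≤ s → 0 ≤ χinv s)
    (hχinv_left : ∀ s, 0 ≤ s → χinv (χ s) = s)
    (hχinv_right : ∀ s, 0 ≤ s → χ (χinv s) = s)
    (hdecr : ∀ x ∈ X, ∀ x' ∈ X, ∀ w ∈ W, ∀ w' ∈ W,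
      V (f x (g x w)) (f x' (g x' w')) ≤ V x x' - α (V x x') + σ ‖w - w'‖)
    (c : ℝ) (hc : 0 ≤ c) :
    ∀ x ∈ X, ∀ x' ∈ X, V x x' ≤ αinv (χinv (σ c)) →
      ∀ w ∈ W, ∀ w' ∈ W, ‖w - w'‖ ≤ c →
        f x (g x w) ∈ X ∧ f x' (g x' w') ∈ X ∧
        V (f x (g x w)) (f x' (g x' w')) ≤ αinv (χinv (σ c)) := by

  intro x hx x' hx' hVle w hw w' hw' hwc
  refine ⟨hXinv x hx w hw, hXinv x' hx' w' hw', ?_⟩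
  set L := αinv (χinv (σ c)) with hL
  have hσc : 0 ≤ σ c := by
    have := hσ.2.1 (Set.self_mem_Ici) (Set.mem_Ici.mpr hc)
    rcases eq_or_lt_of_le hc with h | h
    · simp [← h, hσ.2.2]
    · have := hσ.2.1 (Set.self_mem_Ici) (Set.mem_Ici.mpr hc) h
      linarith [hσ.2.2]
  have hχσ : 0 ≤ χinv (σ c) := hχinv_nonneg _ hσc
  have hLnn : 0 ≤ L := hαinv_nonneg _ hχσ
  have hVnn : 0 ≤ V x x' := hVnonneg x x'
  -- h(s) = s - α s monotone on Ici 0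
  have hmono : V x x' - α (V x x') ≤ L - α L := by
    rcases eq_or_lt_of_le hVle with h | h
    · rw [h]
    · exact le_of_lt (hidα.2.1 (Set.mem_Ici.mpr hVnn) (Set.mem_Ici.mpr hLnn) h)
  have hαL : α L = χinv (σ c) := hαinv_right _ hχσ
  -- χinv (σ c) ≥ σ c since s - χ s ≥ 0 on Ici 0
  have hχge : σ c ≤ χinv (σ c) := by
    have h0 : (0:ℝ) - χ 0 = 0 := hidχ.1.2.2
    have h2 : χ (χinv (σ c)) = σ c := hχinv_right _ hσc
    rcases eq_or_lt_of_le hχσ with h | h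
    · rw [← h] at h2; linarith
    · have h3 := hidχ.1.2.1 (Set.self_mem_Ici) (Set.mem_Ici.mpr hχσ) h
      simp only at h3
      linarith
  have hd := hdecr x hx x' hx' w hw w' hw'
  have hσmono : σ ‖w - w'‖ ≤ σ c := by
    rcases eq_or_lt_of_le hwc with h | h
    · rw [h]
    · exact le_of_lt (hσ.2.1 (Set.mem_Ici.mpr (norm_nonneg _)) (Set.mem_Ici.mpr hc) h)
  calc V (f x (g x w)) (f x' (g x' w')) ≤ V x x' - α (V x x') + σ ‖w - w'‖ := hd
    _ ≤ L - α L + σ c := by linarith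
    _ = L - χinv (σ c) + σ c := by rw [hαL]
    _ ≤ L := by linarith
end
end

section
/- Let X ⊆ ℝⁿ and W ⊆ ℝᵖ with f(x, g(x,w)) ∈ X for all x ∈ X and w ∈ W. Let V : ℝⁿ × ℝⁿ → [0,∞), let α₁, α, χ be class K∞ functions such that s ↦ s − α(s) is class K and s ↦ s − χ(s) is class K∞, and let σ be a class K function. Assume: (i) α₁(|x − x̂|) ≤ V(x, x̂) for all x, x̂ ∈ X; and (ii) V(f(x, g(x,w)), f(x̂, g(x̂,ŵ))) ≤ V(x, x̂) − α(V(x, x̂)) + σ(|w − ŵ|) for all x, x̂ ∈ X and w, ŵ ∈ W. Fix c ≥ 0, initial states x, x̂ ∈ X with V(x, x̂) ≤ α⁻¹(χ⁻¹(σ(c))), and input sequences w, ŵ : ℕ → W with |w(j) − ŵ(j)| ≤ c for all j ∈ ℕ. Then for all k ∈ ℕ, |x_{x,w}(k) − x_{x̂,ŵ}(k)| ≤ α₁⁻¹(α⁻¹(χ⁻¹(σ(c)))). -/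
noncomputable section

/-- trajectories starting in the sublevel set `S` stay within
the `α₁⁻¹(α⁻¹(χ⁻¹(σ(c))))`-tube of each other. -/
theorem stmt_5 {n m p : ℕ}
    (f : Euc n → Euc m → Euc n) (g : Euc n → Euc p → Euc m)
    (X : Set (Euc n)) (W : Set (Euc p))
    (hXinv : ∀ x ∈ X, ∀ w ∈ W, f x (g x w) ∈ X)
    (V : Euc n → Euc n → ℝ) (hVnonneg : ∀ x y, 0 ≤ V x y)
    (α₁ α χ σ : ℝ → ℝ)
    (hα₁ : IsClassKInfty α₁) (hα : IsClassKInfty α) (hχ : IsClassKInfty χ)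
    (hσ : IsClassK σ)
    (hidα : IsClassK (fun s => s - α s))
    (hidχ : IsClassKInfty (fun s => s - χ s))
    (α₁inv αinv χinv : ℝ → ℝ)
    (hα₁inv_nonneg : ∀ s, 0 ≤ s → 0 ≤ α₁inv s)
    (hα₁inv_left : ∀ s, 0 ≤ s → α₁inv (α₁ s) = s)
    (hα₁inv_right : ∀ s, 0 ≤ s → α₁ (α₁inv s) = s)
    (hαinv_nonneg : ∀ s, 0 ≤ s → 0 ≤ αinv s)
    (hαinv_left : ∀ s, 0 ≤ s → αinv (α s) = s)
    (hαinv_right : ∀ s, 0 ≤ s → α (αinv s) = s)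
    (hχinv_nonneg : ∀ s, 0 ≤ s → 0 ≤ χinv s)
    (hχinv_left : ∀ s, 0 ≤ s → χinv (χ s) = s)
    (hχinv_right : ∀ s, 0 ≤ s → χ (χinv s) = s)
    (hlow : ∀ x ∈ X, ∀ x' ∈ X, α₁ ‖x - x'‖ ≤ V x x')
    (hdecr : ∀ x ∈ X, ∀ x' ∈ X, ∀ w ∈ W, ∀ w' ∈ W,
      V (f x (g x w)) (f x' (g x' w')) ≤ V x x' - α (V x x') + σ ‖w - w'‖)
    (c : ℝ) (hc : 0 ≤ c)
    (x x' : Euc n) (hx : x ∈ X) (hx' : x' ∈ X)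
    (hinit : V x x' ≤ αinv (χinv (σ c)))
    (w w' : ℕ → Euc p) (hw : ∀ j, w j ∈ W) (hw' : ∀ j, w' j ∈ W)
    (hwc : ∀ j, ‖w j - w' j‖ ≤ c) :
    ∀ k : ℕ, ‖traj f g x w k - traj f g x' w' k‖ ≤ α₁inv (αinv (χinv (σ c))) := by
  set L : ℝ := αinv (χinv (σ c)) with hL
  have hσc : 0 ≤ σ c := by
    have := hσ.2.1.monotoneOn (Set.mem_Ici.2 le_rfl) (Set.mem_Ici.2 hc) hc
    simpa [hσ.2.2] using this
  have hχσc : 0 ≤ χinv (σ c) := hχinv_nonneg _ hσc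
  have hLnn : 0 ≤ L := hαinv_nonneg _ hχσc
  have hαL : α L = χinv (σ c) := hαinv_right _ hχσc
  have hσcχ : σ c = χ (α L) := by rw [hαL, hχinv_right _ hσc]
  -- χ(s) ≤ s for s ≥ 0
  have hχle : σ c ≤ α L := by
    have h0 : (fun s => s - χ s) 0 ≤ (fun s => s - χ s) (α L) := by
      apply hidχ.1.2.1.monotoneOn (Set.mem_Ici.2 le_rfl)
      · exact Set.mem_Ici.2 (hαL ▸ hχσc)
      · exact hαL ▸ hχσc
    simp only [hχ.1.2.2, sub_zero] at h0
    have : χ (α L) ≤ α L := by linarith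
    linarith [hσcχ ▸ this]
  -- main invariant by induction
  have key : ∀ k : ℕ, traj f g x w k ∈ X ∧ traj f g x' w' k ∈ X ∧
      V (traj f g x w k) (traj f g x' w' k) ≤ L := by
    intro k
    induction k with
    | zero => exact ⟨hx, hx', hinit⟩
    | succ k ih =>
      obtain ⟨hk1, hk2, hkV⟩ := ih
      refine ⟨hXinv _ hk1 _ (hw k), hXinv _ hk2 _ (hw' k), ?_⟩
      have hd := hdecr _ hk1 _ hk2 _ (hw k) _ (hw' k)
      have hσw : σ ‖w k - w' k‖ ≤ σ c := by
        apply hσ.2.1.monotoneOn (Set.mem_Ici.2 (norm_nonneg _)) (Set.mem_Ici.2 hc) (hwc k)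
      have hVnn := hVnonneg (traj f g x w k) (traj f g x' w' k)
      have hmono : (fun s => s - α s) (V (traj f g x w k) (traj f g x' w' k))
          ≤ (fun s => s - α s) L :=
        hidα.2.1.monotoneOn (Set.mem_Ici.2 hVnn) (Set.mem_Ici.2 hLnn) hkV
      simp only at hmono
      calc V (traj f g x w (k+1)) (traj f g x' w' (k+1)) ≤ _ := hd
        _ ≤ (L - α L) + σ c := by linarith
        _ ≤ L := by linarith
  intro k
  obtain ⟨hk1, hk2, hkV⟩ := key k
  have h1 : α₁ ‖traj f g x w k - traj f g x' w' k‖ ≤ α₁ (α₁inv L) := by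
    rw [hα₁inv_right _ hLnn]
    exact le_trans (hlow _ hk1 _ hk2) hkV
  by_contra hcon
  push_neg at hcon
  have := hα₁.1.2.1 (Set.mem_Ici.2 (hα₁inv_nonneg _ hLnn))
    (Set.mem_Ici.2 (norm_nonneg _)) hcon
  linarith
end
end
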